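/- arXiv:1810.11576 — 2 statements merged into one kernel-verified Lean document; each statement's English description precedes it below -/
import Mathlib

section
/- Let U, V be nonzero reals and let p, q be nonzero reals with p ≠ q and p/q ∉ {1, U/V, V/U}. Then for every K > 0 there exists c > 0 such that for every 0 < A < 10c, every nonzero real B, and every j₁, j₂ ∈ {U, V}, one has max(|q·j₁·A⁻² − p·j₂·B⁻²|, |q²·j₁·A⁻³ − p²·j₂·B⁻³|) ≥ K. -/
noncomputable def Mf (a b p q K : ℝ) : ℝ :=
  (2 * |b| * |q| * |a| + 3*p^2*a^2)*K + (|b| + 3*p^2 * |a|)*K^2 + p^2*K^3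

noncomputable def Sf (a b p q K : ℝ) : ℝ :=
  1 + Mf a b p q K / (a^2 * |b*q^2 - p^2*a|)

lemma Mf_nonneg (a b p q K : ℝ) (hK : 0 < K) : 0 ≤ Mf a b p q K := by
  unfold Mf; positivity

lemma Sf_ge_one (a b p q K : ℝ) (hK : 0 < K) : 1 ≤ Sf a b p q K := by
  unfold Sf
  have h := Mf_nonneg a b p q K hK
  have : 0 ≤ Mf a b p q K / (a^2 * |b*q^2 - p^2*a|) := by positivity
  linarith

lemma abs5 (x1 x2 x3 x4 x5 : ℝ) :
    |x1 - x2 - x3 + x4 - x5| ≤ |x1| + |x2| + |x3| + |x4| + |x5| := by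
  calc |x1 - x2 - x3 + x4 - x5| ≤ |x1 - x2 - x3 + x4| + |x5| := abs_sub _ _
    _ ≤ (|x1 - x2 - x3| + |x4|) + |x5| := by gcongr; exact abs_add_le _ _
    _ ≤ ((|x1 - x2| + |x3|) + |x4|) + |x5| := by gcongr; exact abs_sub _ _
    _ ≤ (((|x1| + |x2|) + |x3|) + |x4|) + |x5| := by gcongr; exact abs_sub _ _
    _ = |x1| + |x2| + |x3| + |x4| + |x5| := by ring

set_option maxHeartbeats 1000000 in
lemma auxlem (a b p q K s t : ℝ) (ha : a ≠ 0) (hC : b*q^2 - p^2*a ≠ 0) (hK : 0 < K)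
    (hs : Sf a b p q K < s)
    (he1 : |a*s^2 - b*t^2| < K) (he2 : |q*a*s^3 - p*b*t^3| < K) : False := by
  have hs1 : 1 ≤ s := le_of_lt (lt_of_le_of_lt (Sf_ge_one a b p q K hK) hs)
  have hs0 : 0 < s := lt_of_lt_of_le one_pos hs1
  set e1 := a*s^2 - b*t^2 with h1d
  set e2 := q*a*s^3 - p*b*t^3 with h2d
  have key : a^2*(b*q^2 - p^2*a)*s^6
      = 2*b*q*a*s^3*e2 - b*e2^2 - 3*p^2*a^2*s^4*e1 + 3*p^2*a*s^2*e1^2 - p^2*e1^3 := by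
    rw [h1d, h2d]; ring
  have hs34 : s^3 ≤ s^4 := pow_le_pow_right₀ hs1 (by norm_num)
  have hs24 : s^2 ≤ s^4 := pow_le_pow_right₀ hs1 (by norm_num)
  have hs04 : 1 ≤ s^4 := by simpa using pow_le_pow_right₀ hs1 (Nat.zero_le 4)
  have hE1 : |e1| ≤ K := le_of_lt he1
  have hE2 : |e2| ≤ K := le_of_lt he2
  have b1 : |2*b*q*a*s^3*e2| ≤ 2 * |b| * |q| * |a| * s^4*K := by
    have h : |2*b*q*a*s^3*e2| = 2 * |b| * |q| * |a| * s^3 * |e2| := by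
      rw [abs_mul, abs_mul, abs_mul, abs_mul, abs_mul, abs_pow, abs_of_pos hs0]
      norm_num
    rw [h]
    have h1 : 2 * |b| * |q| * |a| * s^3 ≤ 2 * |b| * |q| * |a| * s^4 := by gcongr
    exact mul_le_mul h1 hE2 (abs_nonneg _) (by positivity)
  have b2 : |b*e2^2| ≤ |b| * s^4*K^2 := by
    have h : |b*e2^2| = |b| * |e2|^2 := by rw [abs_mul, abs_pow]
    rw [h]
    calc |b| * |e2|^2 ≤ |b| * K^2 := by
            have h2 : |e2|^2 ≤ K^2 := pow_le_pow_left₀ (abs_nonneg _) hE2 2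
            nlinarith [abs_nonneg b]
      _ ≤ |b| * s^4*K^2 := by
            nlinarith [mul_nonneg (mul_nonneg (abs_nonneg b) (sq_nonneg K)) (sub_nonneg.mpr hs04)]
  have b3 : |3*p^2*a^2*s^4*e1| ≤ 3*p^2*a^2*s^4*K := by
    have h : |3*p^2*a^2*s^4*e1| = 3*p^2*a^2*s^4 * |e1| := by
      rw [abs_mul]
      have : |3*p^2*a^2*s^4| = 3*p^2*a^2*s^4 := abs_of_nonneg (by positivity)
      rw [this]
    rw [h]; gcongr
  have b4 : |3*p^2*a*s^2*e1^2| ≤ 3*p^2 * |a| * s^4*K^2 := by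
    have h : |3*p^2*a*s^2*e1^2| = 3*p^2 * |a| * s^2 * |e1|^2 := by
      rw [abs_mul, abs_mul, abs_mul, abs_mul, abs_pow, abs_pow, abs_of_pos hs0]
      norm_num
    rw [h]
    have h1 : 3 * p^2 * |a| * s^2 ≤ 3 * p^2 * |a| * s^4 := by gcongr
    have h2 : |e1|^2 ≤ K^2 := pow_le_pow_left₀ (abs_nonneg _) hE1 2
    exact mul_le_mul h1 h2 (by positivity) (by positivity)
  have b5 : |p^2*e1^3| ≤ p^2*s^4*K^3 := by
    have h : |p^2*e1^3| = p^2 * |e1|^3 := by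
      rw [abs_mul, abs_pow, abs_pow]; norm_num
    rw [h]
    calc p^2 * |e1|^3 ≤ p^2*K^3 := by
            have h3 : |e1|^3 ≤ K^3 := pow_le_pow_left₀ (abs_nonneg _) hE1 3
            nlinarith [sq_nonneg p]
      _ ≤ p^2*s^4*K^3 := by
            nlinarith [mul_nonneg (mul_nonneg (sq_nonneg p) (pow_nonneg hK.le 3)) (sub_nonneg.mpr hs04)]
  have tri : |a^2*(b*q^2-p^2*a)*s^6| ≤ Mf a b p q K * s^4 := by
    rw [key]
    calc |2*b*q*a*s^3*e2 - b*e2^2 - 3*p^2*a^2*s^4*e1 + 3*p^2*a*s^2*e1^2 - p^2*e1^3|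
        ≤ |2*b*q*a*s^3*e2| + |b*e2^2| + |3*p^2*a^2*s^4*e1| + |3*p^2*a*s^2*e1^2| + |p^2*e1^3| :=
          abs5 _ _ _ _ _
      _ ≤ 2 * |b| * |q| * |a| * s^4*K + |b| * s^4*K^2 + 3*p^2*a^2*s^4*K + 3*p^2 * |a| * s^4*K^2 + p^2*s^4*K^3 := by
          gcongr
      _ = Mf a b p q K * s^4 := by unfold Mf; ring
  have lhs_eq : |a^2*(b*q^2-p^2*a)*s^6| = a^2 * |b*q^2-p^2*a| * s^6 := by
    rw [abs_mul, abs_mul, abs_pow, abs_pow, sq_abs, abs_of_pos hs0]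
  set D := a^2 * |b*q^2-p^2*a| with hDdef
  have hD : 0 < D := by
    have := abs_pos.mpr hC
    positivity
  have hMs : D*s^6 ≤ Mf a b p q K * s^4 := by rw [← lhs_eq]; exact tri
  have hDM : D*s^2 ≤ Mf a b p q K := by
    have h4 : (0:ℝ) < s^4 := by positivity
    have : D*s^2*s^4 ≤ Mf a b p q K * s^4 := by
      calc D*s^2*s^4 = D*s^6 := by ring
        _ ≤ Mf a b p q K * s^4 := hMs
    exact le_of_mul_le_mul_right this h4
  have hMD : Mf a b p q K / D < s^2 := by
    have h2 : Sf a b p q K = 1 + Mf a b p q K / D := by unfold Sf; rw [hDdef]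
    rw [h2] at hs
    nlinarith [hs1, hs]
  rw [div_lt_iff₀ hD] at hMD
  nlinarith [hDM, hMD]

theorem stmt5 (U V p q : ℝ) (hU : U ≠ 0) (hV : V ≠ 0) (hp : p ≠ 0) (hq : q ≠ 0)
    (hpq : p ≠ q) (h1 : p / q ≠ 1) (h2 : p / q ≠ U / V) (h3 : p / q ≠ V / U) :
    ∀ K : ℝ, 0 < K → ∃ c : ℝ, 0 < c ∧ ∀ A B : ℝ, 0 < A → A < 10 * c → B ≠ 0 →
      ∀ j₁ j₂ : ℝ, (j₁ = U ∨ j₁ = V) → (j₂ = U ∨ j₂ = V) →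
        K ≤ max |q * j₁ / A ^ 2 - p * j₂ / B ^ 2|
              |q ^ 2 * j₁ / A ^ 3 - p ^ 2 * j₂ / B ^ 3| := by
  intro K hK
  set S := max (max (Sf (q*U) (p*U) p q K) (Sf (q*U) (p*V) p q K))
      (max (Sf (q*V) (p*U) p q K) (Sf (q*V) (p*V) p q K)) with hSdef
  have hSuu : Sf (q*U) (p*U) p q K ≤ S := le_trans (le_max_left _ _) (le_max_left _ _)
  have hSuv : Sf (q*U) (p*V) p q K ≤ S := le_trans (le_max_right _ _) (le_max_left _ _)
  have hSvu : Sf (q*V) (p*U) p q K ≤ S := le_trans (le_max_left _ _) (le_max_right _ _)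
  have hSvv : Sf (q*V) (p*V) p q K ≤ S := le_trans (le_max_right _ _) (le_max_right _ _)
  have hS1 : 1 ≤ S := le_trans (Sf_ge_one (q*U) (p*U) p q K hK) hSuu
  have hS0 : 0 < S := lt_of_lt_of_le one_pos hS1
  refine ⟨1/(10*S), by positivity, ?_⟩
  intro A B hA hA10 hB j₁ j₂ hj₁ hj₂
  by_contra hcon
  push_neg at hcon
  rw [max_lt_iff] at hcon
  obtain ⟨hc1, hc2⟩ := hcon
  have hsS : S < A⁻¹ := by
    have h10 : A * S < 1 := by
      have : A < 1/S := by
        calc A < 10 * (1/(10*S)) := hA10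
          _ = 1/S := by field_simp
      calc A * S < (1/S) * S := by gcongr
        _ = 1 := by field_simp
    have : S < 1/A := (lt_div_iff₀ hA).mpr (by linarith [h10])
    simpa [one_div] using this
  have hE1 : q * j₁ / A ^ 2 - p * j₂ / B ^ 2 = (q*j₁)*(A⁻¹)^2 - (p*j₂)*(B⁻¹)^2 := by
    simp only [div_eq_mul_inv, inv_pow]
  have hE2 : q ^ 2 * j₁ / A ^ 3 - p ^ 2 * j₂ / B ^ 3
      = q*(q*j₁)*(A⁻¹)^3 - p*(p*j₂)*(B⁻¹)^3 := by
    simp only [div_eq_mul_inv, inv_pow]; ring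
  rw [hE1] at hc1
  rw [hE2] at hc2
  have hqp : q - p ≠ 0 := sub_ne_zero_of_ne (Ne.symm hpq)
  rcases hj₁ with h1' | h1' <;> rcases hj₂ with h2' | h2' <;> rw [h1', h2'] at hc1 hc2
  · -- j₁ = U, j₂ = U
    refine auxlem (q*U) (p*U) p q K A⁻¹ B⁻¹ (mul_ne_zero hq hU) ?_ hK
      (lt_of_le_of_lt hSuu hsS) hc1 hc2
    have : p*U*q^2 - p^2*(q*U) = p*q*U*(q-p) := by ring
    rw [this]
    exact mul_ne_zero (mul_ne_zero (mul_ne_zero hp hq) hU) hqp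
  · -- j₁ = U, j₂ = V : need q*V ≠ p*U, from h3 : p/q ≠ V/U
    refine auxlem (q*U) (p*V) p q K A⁻¹ B⁻¹ (mul_ne_zero hq hU) ?_ hK
      (lt_of_le_of_lt hSuv hsS) hc1 hc2
    have hne : V*q - p*U ≠ 0 := by
      intro h
      apply h3
      rw [div_eq_div_iff hq hU]
      linarith [h]
    have : p*V*q^2 - p^2*(q*U) = p*q*(V*q - p*U) := by ring
    rw [this]
    exact mul_ne_zero (mul_ne_zero hp hq) hne
  · -- j₁ = V, j₂ = U : need q*U ≠ p*V, from h2 : p/q ≠ U/V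
    refine auxlem (q*V) (p*U) p q K A⁻¹ B⁻¹ (mul_ne_zero hq hV) ?_ hK
      (lt_of_le_of_lt hSvu hsS) hc1 hc2
    have hne : U*q - p*V ≠ 0 := by
      intro h
      apply h2
      rw [div_eq_div_iff hq hV]
      linarith [h]
    have : p*U*q^2 - p^2*(q*V) = p*q*(U*q - p*V) := by ring
    rw [this]
    exact mul_ne_zero (mul_ne_zero hp hq) hne
  · -- j₁ = V, j₂ = V
    refine auxlem (q*V) (p*V) p q K A⁻¹ B⁻¹ (mul_ne_zero hq hV) ?_ hK
      (lt_of_le_of_lt hSvv hsS) hc1 hc2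
    have : p*V*q^2 - p^2*(q*V) = p*q*V*(q-p) := by ring
    rw [this]
    exact mul_ne_zero (mul_ne_zero (mul_ne_zero hp hq) hV) hqp
end

section
/- Let (R_α)^f be the special flow over the rotation by α with roof f > 0, and fix 0 < ε < 1/100. Suppose (y,s), (y',s') ∈ 𝕋^f satisfy d^f((y,s),(y',s')) < ε³ (product metric), and t ∈ ℝ is such that the point (R_α)^f_t(y,s) = (x,u) satisfies ε² < u < f(x) − ε², and suppose there is b̃(t) ∈ ℝ such that |f^{(w)}(y) − f^{(w)}(y') − b̃(t)| < 4ε^{8/3} for both w = n(y,s,t) and w = n(y,s,t)+1, where n(y,s,t) is the integer with f^{(n)}(y) ≤ t + s < f^{(n+1)}(y). Then d^f((R_α)^f_t(y,s), (R_α)^f_{t − b̃(t)}(y',s')) < ε². -/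
noncomputable def dNear (x : ℝ) : ℝ := |x - (round x : ℝ)|

/-- Birkhoff sums (with `ℤ` index) of `f` along the rotation by `α`. -/
noncomputable def SZ (α : ℝ) (f : ℝ → ℝ) (n : ℤ) (y : ℝ) : ℝ :=
  if 0 ≤ n then ∑ j ∈ Finset.range n.toNat, f (y + (j : ℝ) * α)
  else - ∑ j ∈ Finset.range (-n).toNat, f (y - ((j : ℝ) + 1) * α)

lemma SZ_succ (α : ℝ) (f : ℝ → ℝ) (n : ℤ) (y : ℝ) :
    SZ α f (n + 1) y = SZ α f n y + f (y + (n : ℝ) * α) := by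
  rcases le_or_gt 0 n with h | h
  · have h1 : (0 : ℤ) ≤ n + 1 := by omega
    have ht : (n + 1).toNat = n.toNat + 1 := by omega
    have hc : ((n.toNat : ℕ) : ℝ) = (n : ℝ) := by exact_mod_cast Int.toNat_of_nonneg h
    simp only [SZ, if_pos h, if_pos h1, ht, Finset.sum_range_succ, hc]
  · rcases eq_or_lt_of_le (by omega : n + 1 ≤ 0) with h1 | h1
    · have hn : n = -1 := by omega
      subst hn
      have : (((-1 : ℤ) : ℝ)) = (-1 : ℝ) := by norm_num
      simp only [SZ, show ((-1 : ℤ) + 1) = 0 by ring, le_refl, if_pos,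
        if_neg (by omega : ¬ (0:ℤ) ≤ -1), show (-(-1) : ℤ) = 1 by ring]
      rw [show y + ((-1:ℤ):ℝ) * α = y - α by push_cast; ring]
      simp
    · have h1' : ¬ (0 : ℤ) ≤ n + 1 := by omega
      have h' : ¬ (0 : ℤ) ≤ n := by omega
      have ht : (-n).toNat = (-(n+1)).toNat + 1 := by omega
      have hc : (((-(n+1)).toNat : ℕ) : ℝ) = -(n : ℝ) - 1 := by
        have hz : (((-(n+1)).toNat : ℕ) : ℤ) = -(n+1) := Int.toNat_of_nonneg (by omega)
        rw [← Int.cast_natCast, hz]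
        push_cast
        ring
      have key : ∑ j ∈ Finset.range (-n).toNat, f (y - ((j:ℝ)+1)*α)
          = (∑ j ∈ Finset.range (-(n+1)).toNat, f (y - ((j:ℝ)+1)*α)) + f (y + (n:ℝ)*α) := by
        rw [ht, Finset.sum_range_succ]
        congr 1
        rw [hc]
        ring_nf
      simp only [SZ, if_neg h', if_neg h1', key]
      ring

theorem stmt17 (α : ℝ) (f : ℝ → ℝ) (hfpos : ∀ x, 0 < f x)
    (hfper : Function.Periodic f 1)
    (ε : ℝ) (hε0 : 0 < ε) (hε : ε < 1 / 100)
    (y s y' s' : ℝ) (hs0 : 0 ≤ s) (hs1 : s < f y) (hs0' : 0 ≤ s') (hs1' : s' < f y')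
    (hclose : max (dNear (y - y')) |s - s'| < ε ^ 3)
    (t : ℝ) (n : ℤ)
    (hn1 : SZ α f n y ≤ s + t) (hn2 : s + t < SZ α f (n + 1) y)
    (hmid1 : ε ^ 2 < s + t - SZ α f n y)
    (hmid2 : s + t - SZ α f n y < f (y + (n : ℝ) * α) - ε ^ 2)
    (btil : ℝ)
    (hb1 : |(SZ α f n y - SZ α f n y') - btil| < 4 * ε ^ ((8 : ℝ) / 3))
    (hb2 : |(SZ α f (n + 1) y - SZ α f (n + 1) y') - btil| < 4 * ε ^ ((8 : ℝ) / 3)) :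
    ∃ m : ℤ, SZ α f m y' ≤ s' + (t - btil) ∧ s' + (t - btil) < SZ α f (m + 1) y' ∧
      max (dNear ((y + (n : ℝ) * α) - (y' + (m : ℝ) * α)))
        |(s + t - SZ α f n y) - (s' + (t - btil) - SZ α f m y')| < ε ^ 2 := by
  -- numeric facts
  have hε2pos : 0 < ε ^ 2 := by positivity
  have hc23 : ε ^ ((2:ℝ)/3) < 1 / 10 := by
    have h3 : (ε ^ ((2:ℝ)/3)) ^ 3 < (1/10 : ℝ) ^ 3 := by
      rw [← Real.rpow_natCast (ε ^ ((2:ℝ)/3)) 3, ← Real.rpow_mul hε0.le]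
      norm_num
      nlinarith
    exact lt_of_pow_lt_pow_left₀ 3 (by norm_num) h3
  have h83 : ε ^ ((8:ℝ)/3) = ε ^ 2 * ε ^ ((2:ℝ)/3) := by
    rw [show (8:ℝ)/3 = 2 + 2/3 by norm_num, Real.rpow_add hε0]
    congr 1
    rw [show (2:ℝ) = ((2:ℕ):ℝ) by norm_num, Real.rpow_natCast]
  have hsmall : 4 * ε ^ ((8:ℝ)/3) < (2/5) * ε ^ 2 := by
    rw [h83]; nlinarith
  have hcube : ε ^ 3 < ε ^ 2 / 100 := by nlinarith
  have hss : |s - s'| < ε ^ 3 := lt_of_le_of_lt (le_max_right _ _) hclose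
  have hdn : dNear (y - y') < ε ^ 3 := lt_of_le_of_lt (le_max_left _ _) hclose
  obtain ⟨hss1, hss2⟩ := abs_lt.mp hss
  obtain ⟨hb11, hb12⟩ := abs_lt.mp hb1
  obtain ⟨hb21, hb22⟩ := abs_lt.mp hb2
  have hSsucc := SZ_succ α f n y
  have hSsucc' := SZ_succ α f n y'
  refine ⟨n, ?_, ?_, ?_⟩
  · linarith
  · linarith
  · apply max_lt
    · have : (y + (n : ℝ) * α) - (y' + (n : ℝ) * α) = y - y' := by ring
      rw [this]
      calc dNear (y - y') < ε ^ 3 := hdn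
        _ < ε ^ 2 := by nlinarith
    · rw [abs_lt]
      constructor <;> linarith
end
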